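/- arXiv:2604.14673 — 7 statements merged into one kernel-verified Lean document; each statement's English description precedes it below -/
import Mathlib

section
/- If Γ is an unbalanced signed bipartite graph containing no negative 4-cycle, then Γ contains a negative induced cycle of length at least 6; in particular, both partite sets of the underlying bipartite graph have size at least 3. -/
/-!
Take a shortest negative cycle `w`. A chord `xy` of `w` would split it into two cycles through
the edge `xy`, each shorter than `w`, whose signs multiply to the sign of `w` (the chord is
counted twice); one of them would be a shorter negative cycle. So `w` is induced. In a bipartite
graph every closed walk has even length, and a cycle has length at least 3, so excluding negative
4-cycles forces length at least 6. The vertices of a cycle alternate colours, so six consecutive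
ones give three distinct vertices of each colour.
-/

open Matrix Finset

structure SignedGraph (V : Type*) where
  G : SimpleGraph V
  sign : V → V → ℝ
  sign_symm : ∀ u v, sign u v = sign v u
  sign_edge : ∀ u v, G.Adj u v → sign u v = 1 ∨ sign u v = -1
  sign_nonedge : ∀ u v, ¬ G.Adj u v → sign u v = 0

def SignedGraph.adjMatrix {V : Type*} (Γ : SignedGraph V) : Matrix V V ℝ :=
  Matrix.of fun u v => Γ.sign u v

def SignedGraph.edgeSign {V : Type*} (Γ : SignedGraph V) : Sym2 V → ℝ :=
  Sym2.lift ⟨Γ.sign, Γ.sign_symm⟩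

def SignedGraph.IsNegCycle {V : Type*} (Γ : SignedGraph V) {u : V}
    (w : Γ.G.Walk u u) : Prop :=
  w.IsCycle ∧ (w.edges.map Γ.edgeSign).prod = -1

def SignedGraph.Unbalanced {V : Type*} (Γ : SignedGraph V) : Prop :=
  ∃ (u : V) (w : Γ.G.Walk u u), Γ.IsNegCycle w

namespace SimpleGraph

variable {V : Type*} {G : SimpleGraph V}

lemma Coloring.eq_getVert_iff_even (c : G.Coloring Bool) {u v : V} (p : G.Walk u v) {n : ℕ}
    (hn : n ≤ p.length) : c u = c (p.getVert n) ↔ Even n := by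
  have h := c.even_length_iff_congr (p.take n)
  rw [Walk.take_length, min_eq_left hn] at h
  rw [h, Bool.eq_iff_iff]

lemma Coloring.getVert_add_two_mul (c : G.Coloring Bool) {u v : V} (p : G.Walk u v)
    {s k : ℕ} (h : s + 2 * k ≤ p.length) : c (p.getVert (s + 2 * k)) = c (p.getVert s) := by
  have hpar : Even (s + 2 * k) ↔ Even s := by simp [Nat.even_add]
  have cancel : ∀ a x y : Bool, (a = x ↔ a = y) → x = y := by decide
  exact cancel _ _ _ ((c.eq_getVert_iff_even p h).trans
    (hpar.trans (c.eq_getVert_iff_even p (by omega)).symm))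

lemma Walk.IsCycle.three_le_card_coloring_eq [Fintype V] [DecidableEq V] (c : G.Coloring Bool)
    {u : V} {p : G.Walk u u} (hp : p.IsCycle) (h6 : 6 ≤ p.length) (b : Bool) :
    3 ≤ (univ.filter fun v => c v = b).card := by
  obtain ⟨s, hs1, hs2, hsb⟩ : ∃ s, 1 ≤ s ∧ s ≤ 2 ∧ c (p.getVert s) = b := by
    have h12 : c (p.getVert 1) ≠ c (p.getVert 2) := c.valid (p.adj_getVert_succ (by omega))
    by_cases h1 : c (p.getVert 1) = b
    · exact ⟨1, le_rfl, by omega, h1⟩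
    · exact ⟨2, by omega, le_rfl, by cases b <;> simp_all⟩
  let f : ℕ → V := fun k => p.getVert (s + 2 * k)
  have hf : Set.InjOn f (range 3) := fun i hi j hj hij => by
    simp only [coe_range, Set.mem_Iio] at hi hj
    have := hp.getVert_injOn (by simp only [Set.mem_ofPred_eq]; omega)
      (by simp only [Set.mem_ofPred_eq]; omega) hij
    omega
  calc 3 = ((range 3).image f).card := by rw [card_image_of_injOn hf, card_range]
    _ ≤ _ := card_le_card fun v hv => by
      obtain ⟨k, hk, rfl⟩ := mem_image.mp hv
      have hk3 : k < 3 := mem_range.mp hk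
      exact mem_filter.mpr ⟨mem_univ _, hsb ▸ c.getVert_add_two_mul p (by omega)⟩

end SimpleGraph

namespace SignedGraph

open SimpleGraph

variable {V : Type*} (Γ : SignedGraph V)

def walkSign {u v : V} (p : Γ.G.Walk u v) : ℝ := (p.edges.map Γ.edgeSign).prod

@[simp]
lemma walkSign_cons {u v w : V} (h : Γ.G.Adj u v) (p : Γ.G.Walk v w) :
    Γ.walkSign (.cons h p) = Γ.sign u v * Γ.walkSign p := by
  simp [walkSign, edgeSign]

@[simp]
lemma walkSign_append {u v w : V} (p : Γ.G.Walk u v) (q : Γ.G.Walk v w) :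
    Γ.walkSign (p.append q) = Γ.walkSign p * Γ.walkSign q := by
  simp [walkSign]

@[simp]
lemma walkSign_reverse {u v : V} (p : Γ.G.Walk u v) : Γ.walkSign p.reverse = Γ.walkSign p := by
  rw [walkSign, walkSign, Walk.edges_reverse, List.map_reverse, List.prod_reverse]

lemma walkSign_rotate [DecidableEq V] {u v : V} (w : Γ.G.Walk v v) (hu : u ∈ w.support) :
    Γ.walkSign (w.rotate u hu) = Γ.walkSign w :=
  ((w.rotate_edges u hu).perm.map _).prod_eq

lemma walkSign_eq_one_or_neg_one {u v : V} (p : Γ.G.Walk u v) :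
    Γ.walkSign p = 1 ∨ Γ.walkSign p = -1 := by
  induction p with
  | nil => simp [walkSign]
  | cons h p ih =>
    rw [walkSign_cons]
    rcases Γ.sign_edge _ _ h with hs | hs <;> rcases ih with hp | hp <;> simp [hs, hp]

lemma sign_mul_self {u v : V} (h : Γ.G.Adj u v) : Γ.sign u v * Γ.sign u v = 1 := by
  rcases Γ.sign_edge u v h with hs | hs <;> simp [hs]

variable {Γ}

lemma IsNegCycle.rotate [DecidableEq V] {u v : V} {w : Γ.G.Walk v v} (hw : Γ.IsNegCycle w)
    (hu : u ∈ w.support) : Γ.IsNegCycle (w.rotate u hu) :=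
  ⟨hw.1.rotate hu, (Γ.walkSign_rotate w hu).trans hw.2⟩

lemma IsNegCycle.exists_shorter_of_chord [DecidableEq V] {x y : V} {w : Γ.G.Walk x x}
    (hw : Γ.IsNegCycle w) (hy : y ∈ w.support) (hxy : Γ.G.Adj x y) (hch : s(x, y) ∉ w.edges) :
    ∃ w' : Γ.G.Walk x x, Γ.IsNegCycle w' ∧ w'.length < w.length := by
  set p := w.takeUntil y hy
  set q := w.dropUntil y hy
  have hpq : p.append q = w := w.take_spec hy
  have hp : p.IsPath := hw.1.isPath_takeUntil hy
  have hq : q.IsPath :=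
    Walk.IsCycle.isPath_of_append_right (Walk.not_nil_of_ne hxy.ne) (hpq ▸ hw.1)
  have hA : (Walk.cons hxy p.reverse).IsCycle := (Walk.cons_isCycle_iff _ hxy).mpr
    ⟨hp.reverse, fun h => hch (w.edges_takeUntil_subset_edges hy (by simpa using h))⟩
  have hB : (Walk.cons hxy q).IsCycle := (Walk.cons_isCycle_iff _ hxy).mpr
    ⟨hq, fun h => hch (w.edges_dropUntil_subset_edges hy h)⟩
  have hsign : Γ.walkSign (.cons hxy p.reverse) * Γ.walkSign (.cons hxy q) = Γ.walkSign w := by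
    rw [← hpq, walkSign_cons, walkSign_cons, walkSign_reverse, walkSign_append,
      mul_mul_mul_comm, Γ.sign_mul_self hxy, one_mul]
  have hlen : w.length = p.length + q.length := by rw [← hpq, Walk.length_append]
  have hA3 := hA.three_le_length
  have hB3 := hB.three_le_length
  simp only [Walk.length_cons, Walk.length_reverse] at hA3 hB3
  rcases Γ.walkSign_eq_one_or_neg_one (.cons hxy p.reverse) with hA1 | hA1
  · refine ⟨_, ⟨hB, ?_⟩, by simp only [Walk.length_cons]; omega⟩
    rw [hA1, one_mul] at hsign
    exact hsign.trans hw.2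
  · exact ⟨_, ⟨hA, hA1⟩, by simp only [Walk.length_cons, Walk.length_reverse]; omega⟩

lemma IsNegCycle.chordless_of_minimal [DecidableEq V] {u : V} {w : Γ.G.Walk u u}
    (hw : Γ.IsNegCycle w)
    (hmin : ∀ (z : V) (w' : Γ.G.Walk z z), Γ.IsNegCycle w' → w.length ≤ w'.length) :
    ∀ x y, x ∈ w.support → y ∈ w.support → Γ.G.Adj x y → s(x, y) ∈ w.edges := by
  intro x y hx hy hxy
  by_contra hch
  obtain ⟨w', hw', hlt⟩ := (hw.rotate hx).exists_shorter_of_chord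
    ((w.mem_support_rotate_iff x hx).mpr hy) hxy (by rwa [(w.rotate_edges x hx).mem_iff])
  have := hmin x w' hw'
  rw [Walk.length_rotate] at hlt
  omega

lemma Unbalanced.exists_isNegCycle_minimal (hU : Γ.Unbalanced) :
    ∃ (u : V) (w : Γ.G.Walk u u), Γ.IsNegCycle w ∧
      ∀ (z : V) (w' : Γ.G.Walk z z), Γ.IsNegCycle w' → w.length ≤ w'.length := by
  classical
  have hex : ∃ n, ∃ (u : V) (w : Γ.G.Walk u u), Γ.IsNegCycle w ∧ w.length = n :=
    let ⟨u, w, hw⟩ := hU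
    ⟨_, u, w, hw, rfl⟩
  obtain ⟨u, w, hw, hlen⟩ := Nat.find_spec hex
  exact ⟨u, w, hw, fun z w' hw' => hlen ▸ Nat.find_min' hex ⟨z, w', hw', rfl⟩⟩

end SignedGraph

/-- An unbalanced signed bipartite graph with no negative 4-cycle contains a negative
induced cycle of length at least 6; in particular both partite sets have size at least 3. -/
theorem exists_negCycle_ge_six {V : Type*} [Fintype V] [DecidableEq V]
    (Γ : SignedGraph V) (c : V → Bool) (hc : ∀ u v, Γ.G.Adj u v → c u ≠ c v)
    (hU : Γ.Unbalanced)
    (hC4 : ∀ (u : V) (w : Γ.G.Walk u u), Γ.IsNegCycle w → w.length ≠ 4) :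
    (∃ (u : V) (w : Γ.G.Walk u u), Γ.IsNegCycle w ∧ 6 ≤ w.length ∧
      ∀ x y, x ∈ w.support → y ∈ w.support → Γ.G.Adj x y → s(x, y) ∈ w.edges) ∧
    3 ≤ (Finset.univ.filter fun v => c v = true).card ∧
    3 ≤ (Finset.univ.filter fun v => c v = false).card := by
  obtain ⟨u, w, hw, hmin⟩ := hU.exists_isNegCycle_minimal
  let κ : Γ.G.Coloring Bool := SimpleGraph.Coloring.mk c (hc _ _)
  have heven : Even w.length := (κ.even_length_iff_congr w).mpr Iff.rfl
  have h6 : 6 ≤ w.length := by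
    have h3 := hw.1.three_le_length
    have h4 := hC4 u w hw
    obtain ⟨k, hk⟩ := heven
    omega
  exact ⟨⟨u, w, hw, h6, hw.chordless_of_minimal hmin⟩,
    hw.1.three_le_card_coloring_eq κ h6 true, hw.1.three_le_card_coloring_eq κ h6 false⟩
end

section
/- Let Γ be a signed graph with largest eigenvalue λ₁ and associated eigenvector x. If u,v are non-adjacent vertices with x_u x_v ≥ 0 and (x_u, x_v) ≠ (0,0), then the signed graph Γ' obtained by adding the positive edge uv satisfies λ₁(Γ') > λ₁(Γ). -/
open Matrix Finset

/-!
If `λ₁(Γ') ≤ λ₁(Γ) = λ`, then `λ • 1 - A(Γ')` is positive semidefinite. Writing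
`A(Γ') = A(Γ) + E` with `E` the adjacency matrix of the edge `uv`, the eigenvector equation gives
`(λ • 1 - A(Γ')) x = -E x`, so the quadratic form of `λ • 1 - A(Γ')` at `x` is
`-2 x_u x_v ≤ 0`. A positive semidefinite form vanishes only on the kernel, hence `E x = 0`,
i.e. `x_u = x_v = 0`.
-/

open scoped MatrixOrder ComplexOrder in
lemma Matrix.IsHermitian.posSemidef_smul_one_sub {n 𝕜 : Type*} [Fintype n] [DecidableEq n]
    [RCLike 𝕜] {A : Matrix n n 𝕜} (hA : A.IsHermitian) {μ : ℝ}
    (h : ∀ i, hA.eigenvalues i ≤ μ) : (μ • 1 - A).PosSemidef := by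
  have hle : A ≤ algebraMap ℝ _ μ := le_algebraMap_of_spectrum_le (by
    rw [hA.spectrum_real_eq_range_eigenvalues]
    rintro _ ⟨i, rfl⟩
    exact h i) hA.isSelfAdjoint
  rwa [Matrix.le_iff, Algebra.algebraMap_eq_smul_one] at hle

open scoped ComplexOrder in
lemma Matrix.PosSemidef.mulVec_eq_zero_of_dotProduct_nonpos {n 𝕜 : Type*} [Fintype n]
    [RCLike 𝕜] {M : Matrix n n 𝕜} (hM : M.PosSemidef) {x : n → 𝕜}
    (h : star x ⬝ᵥ M *ᵥ x ≤ 0) : M *ᵥ x = 0 :=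
  (hM.dotProduct_mulVec_zero_iff x).mp (le_antisymm h (hM.dotProduct_mulVec_nonneg x))

section EdgeMatrix

variable {V R : Type*} [Fintype V] [DecidableEq V] [CommSemiring R]

def edgeMatrix (u v : V) : Matrix V V R :=
  Matrix.of fun a b => if (a = u ∧ b = v) ∨ (a = v ∧ b = u) then 1 else 0

lemma edgeMatrix_mulVec {u v : V} (h : u ≠ v) (x : V → R) :
    edgeMatrix u v *ᵥ x = Pi.single u (x v) + Pi.single v (x u) := by
  ext a
  by_cases hau : a = u
  · subst hau
    simp [edgeMatrix, mulVec, dotProduct, h]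
  by_cases hav : a = v
  · subst hav
    simp [edgeMatrix, mulVec, dotProduct, h.symm]
  · simp [edgeMatrix, mulVec, dotProduct, hau, hav]

lemma dotProduct_edgeMatrix_mulVec {u v : V} (h : u ≠ v) (x : V → R) :
    x ⬝ᵥ edgeMatrix u v *ᵥ x = 2 * (x u * x v) := by
  rw [edgeMatrix_mulVec h, dotProduct_add, dotProduct_single, dotProduct_single]
  ring

lemma edgeMatrix_mulVec_eq_zero_iff {u v : V} (h : u ≠ v) (x : V → R) :
    edgeMatrix u v *ᵥ x = 0 ↔ x u = 0 ∧ x v = 0 := by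
  rw [edgeMatrix_mulVec h]
  constructor
  · intro h0
    have hu := congrFun h0 u
    have hv := congrFun h0 v
    simp only [Pi.add_apply, Pi.single_eq_same, Pi.single_eq_of_ne h, Pi.single_eq_of_ne h.symm,
      Pi.zero_apply, add_zero, zero_add] at hu hv
    exact ⟨hv, hu⟩
  · rintro ⟨hu, hv⟩
    simp [hu, hv]

end EdgeMatrix

theorem lambda_one_lt_of_add_positive_edge_general {V : Type*} [Fintype V] [DecidableEq V]
    [Nonempty V] (Γ Γ' : SignedGraph V) (u v : V) (hne : u ≠ v)
    (hadj : Γ'.adjMatrix = Γ.adjMatrix +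
      Matrix.of fun a b => if (a = u ∧ b = v) ∨ (a = v ∧ b = u) then (1 : ℝ) else 0)
    (hA : Γ.adjMatrix.IsHermitian) (hA' : Γ'.adjMatrix.IsHermitian)
    (x : V → ℝ)
    (heig : Γ.adjMatrix *ᵥ x =
      (Finset.univ.sup' Finset.univ_nonempty hA.eigenvalues) • x)
    (hprod : 0 ≤ x u * x v) (hnz : x u ≠ 0 ∨ x v ≠ 0) :
    Finset.univ.sup' Finset.univ_nonempty hA.eigenvalues <
      Finset.univ.sup' Finset.univ_nonempty hA'.eigenvalues := by
  set lam := Finset.univ.sup' Finset.univ_nonempty hA.eigenvalues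
  by_contra! hle
  have hE : Γ'.adjMatrix = Γ.adjMatrix + edgeMatrix u v := hadj
  have hM : (lam • 1 - Γ'.adjMatrix).PosSemidef :=
    hA'.posSemidef_smul_one_sub fun i => (le_sup' _ (mem_univ i)).trans hle
  have hMx : (lam • 1 - Γ'.adjMatrix) *ᵥ x = -(edgeMatrix u v *ᵥ x) := by
    rw [sub_mulVec, hE, add_mulVec, heig, smul_mulVec, one_mulVec]
    abel
  have hker : (lam • 1 - Γ'.adjMatrix) *ᵥ x = 0 := hM.mulVec_eq_zero_of_dotProduct_nonpos <| by
    rw [star_trivial, hMx, dotProduct_neg, dotProduct_edgeMatrix_mulVec hne]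
    linarith
  rw [hMx, neg_eq_zero, edgeMatrix_mulVec_eq_zero_iff hne] at hker
  tauto

/-- Adding a positive edge between non-adjacent vertices `u, v` with `x_u x_v ≥ 0`
and `(x_u, x_v) ≠ (0,0)`, where `x` is an eigenvector for `λ₁(Γ)`, strictly increases
the largest eigenvalue. -/
theorem lambda_one_lt_of_add_positive_edge {V : Type*} [Fintype V] [DecidableEq V]
    [Nonempty V] (Γ Γ' : SignedGraph V) (u v : V) (hne : u ≠ v)
    (huv : ¬ Γ.G.Adj u v)
    (hadj : Γ'.adjMatrix = Γ.adjMatrix +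
      Matrix.of fun a b => if (a = u ∧ b = v) ∨ (a = v ∧ b = u) then (1 : ℝ) else 0)
    (hA : Γ.adjMatrix.IsHermitian) (hA' : Γ'.adjMatrix.IsHermitian)
    (x : V → ℝ) (hx : x ≠ 0)
    (heig : Γ.adjMatrix *ᵥ x =
      (Finset.univ.sup' Finset.univ_nonempty hA.eigenvalues) • x)
    (hprod : 0 ≤ x u * x v) (hnz : x u ≠ 0 ∨ x v ≠ 0) :
    Finset.univ.sup' Finset.univ_nonempty hA.eigenvalues <
      Finset.univ.sup' Finset.univ_nonempty hA'.eigenvalues :=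
  lambda_one_lt_of_add_positive_edge_general Γ Γ' u v hne hadj hA hA' x heig hprod hnz
end

section
/- Let Γ be a signed graph with largest eigenvalue λ₁ and associated eigenvector x. If uv is a negative edge of Γ with x_u x_v ≥ 0 and (x_u, x_v) ≠ (0,0), then deleting the edge uv strictly increases the largest eigenvalue, and reversing its sign to positive also strictly increases the largest eigenvalue. -/
open Matrix Finset

/-! Deleting the negative edge `uv` adds `c = 1` to the entries `uv` and `vu` of the adjacency
matrix `A`, reversing it adds `c = 2`. Such a perturbation lifts the Rayleigh quotient of
`y = x + δ x_u e_v` (swap `u` and `v` if `x_u = 0`) above `λ₁(A)` for small `δ > 0`: from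
`Ax = λ₁ x`, `yᵀ(A + c E_uv + c E_vu)y - λ₁ |y|² = 2c x_u x_v + δ x_u² (2c + δ (A_vv - λ₁)) > 0`.
Every Rayleigh quotient of the perturbed matrix is bounded by its largest eigenvalue. -/

namespace Matrix

section Spectrum

open scoped ComplexOrder

variable {n 𝕜 : Type*} [Fintype n] [DecidableEq n] [RCLike 𝕜]

lemma IsHermitian.posSemidef_smul_one_sub_s7 {A : Matrix n n 𝕜} (hA : A.IsHermitian) {μ : ℝ}
    (hμ : ∀ i, hA.eigenvalues i ≤ μ) : ((μ : 𝕜) • 1 - A).PosSemidef := by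
  set U := hA.eigenvectorUnitary
  rw [hA.spectral_theorem, ← map_one (Unitary.conjStarAlgAut 𝕜 _ U), ← map_smul, ← map_sub,
    Unitary.conjStarAlgAut_apply, Unitary.isUnit_coe.posSemidef_star_right_conjugate_iff,
    smul_one_eq_diagonal, diagonal_sub, posSemidef_diagonal_iff]
  intro i
  simpa using hμ i

lemma IsHermitian.dotProduct_mulVec_le {A : Matrix n n ℝ} (hA : A.IsHermitian) {μ : ℝ}
    (hμ : ∀ i, hA.eigenvalues i ≤ μ) (y : n → ℝ) : y ⬝ᵥ (A *ᵥ y) ≤ μ * (y ⬝ᵥ y) := by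
  have := (hA.posSemidef_smul_one_sub_s7 hμ).dotProduct_mulVec_nonneg y
  simp only [star_trivial, sub_mulVec, smul_mulVec, one_mulVec, dotProduct_sub, dotProduct_smul,
    RCLike.ofReal_real_eq_id, id, smul_eq_mul] at this
  linarith

lemma IsHermitian.lt_sup_eigenvalues_of_lt_dotProduct_mulVec [Nonempty n] {A : Matrix n n ℝ}
    (hA : A.IsHermitian) {μ : ℝ} {y : n → ℝ} (hy : y ≠ 0) (h : μ * (y ⬝ᵥ y) < y ⬝ᵥ (A *ᵥ y)) :
    μ < univ.sup' univ_nonempty hA.eigenvalues := by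
  have hle := hA.dotProduct_mulVec_le (μ := univ.sup' univ_nonempty hA.eigenvalues)
    (fun i => le_sup' hA.eigenvalues (mem_univ i)) y
  have hpos : 0 < y ⬝ᵥ y := by simpa using dotProduct_star_self_pos_iff.mpr hy
  exact lt_of_mul_lt_mul_right (h.trans_le hle) hpos.le

end Spectrum

variable {n R : Type*} [DecidableEq n]

def symmSingle [Zero R] (u v : n) (c : R) : Matrix n n R :=
  of fun a b => if (a = u ∧ b = v) ∨ (a = v ∧ b = u) then c else 0

lemma symmSingle_comm [Zero R] (u v : n) (c : R) : symmSingle v u c = symmSingle u v c := by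
  ext a b
  simp only [symmSingle, of_apply, or_comm]

lemma symmSingle_eq_add [AddZeroClass R] {u v : n} (huv : u ≠ v) (c : R) :
    symmSingle u v c = single u v c + single v u c := by
  ext a b
  by_cases ha : a = u <;> by_cases hb : b = v <;> simp_all [symmSingle, single_apply, eq_comm]

variable [Fintype n]

lemma dotProduct_symmSingle_mulVec [CommSemiring R] {u v : n} (huv : u ≠ v) (c : R)
    (y : n → R) : y ⬝ᵥ (symmSingle u v c *ᵥ y) = 2 * c * (y u * y v) := by
  rw [symmSingle_eq_add huv, add_mulVec, single_mulVec, single_mulVec, dotProduct_add]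
  simp only [dotProduct, Function.update_apply, Pi.zero_apply, mul_ite, mul_zero, sum_ite_eq',
    mem_univ, if_true]
  ring

lemma IsSymm.dotProduct_mulVec_add_single [CommRing R] {A : Matrix n n R} (hA : A.IsSymm)
    {x : n → R} {μ : R} (hx : A *ᵥ x = μ • x) (v : n) (t : R) :
    (x + Pi.single v t) ⬝ᵥ (A *ᵥ (x + Pi.single v t)) =
      μ * ((x + Pi.single v t) ⬝ᵥ (x + Pi.single v t)) + t ^ 2 * (A v v - μ) := by
  have hsymm : x ⬝ᵥ (A *ᵥ Pi.single v t) = Pi.single v t ⬝ᵥ (A *ᵥ x) := by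
    rw [dotProduct_mulVec, ← mulVec_transpose, hA.eq, dotProduct_comm]
  rw [mulVec_add, dotProduct_add, add_dotProduct, add_dotProduct, hsymm]
  simp only [hx, dotProduct_smul, smul_eq_mul, single_dotProduct, mulVec_single, op_smul_eq_smul,
    col_apply, dotProduct_add, add_dotProduct, dotProduct_single, Pi.add_apply, Pi.single_eq_same]
  ring

lemma IsSymm.exists_lt_dotProduct_add_symmSingle_mulVec {A : Matrix n n ℝ} (hA : A.IsSymm)
    {x : n → ℝ} {μ : ℝ} (hx : A *ᵥ x = μ • x) {u v : n} (huv : u ≠ v) (hxu : x u ≠ 0)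
    (hprod : 0 ≤ x u * x v) {c : ℝ} (hc : 0 < c) :
    ∃ y ≠ 0, μ * (y ⬝ᵥ y) < y ⬝ᵥ ((A + symmSingle u v c) *ᵥ y) := by
  set d := A v v - μ
  set δ := c / (|d| + 1)
  have hδ : 0 < δ := by positivity
  have hδd : δ * |d| < c := by
    rw [div_mul_eq_mul_div, div_lt_iff₀ (by positivity)]
    nlinarith
  refine ⟨x + Pi.single v (δ * x u), fun h => hxu ?_, ?_⟩
  · simpa [huv] using congr_fun h u
  rw [add_mulVec, dotProduct_add _ (A *ᵥ _), hA.dotProduct_mulVec_add_single hx,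
    dotProduct_symmSingle_mulVec huv]
  simp only [Pi.add_apply, Pi.single_eq_same, Pi.single_eq_of_ne huv, add_zero]
  have hxu2 : 0 < x u ^ 2 := by positivity
  nlinarith [neg_abs_le d, mul_pos hδ hxu2]

lemma IsSymm.lt_sup_eigenvalues_of_eq_add_symmSingle [Nonempty n] {A B : Matrix n n ℝ}
    (hA : A.IsSymm) (hB : B.IsHermitian) {u v : n} (huv : u ≠ v) {c : ℝ} (hc : 0 < c)
    (hBA : B = A + symmSingle u v c) {x : n → ℝ} {μ : ℝ} (hx : A *ᵥ x = μ • x)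
    (hprod : 0 ≤ x u * x v) (hnz : x u ≠ 0 ∨ x v ≠ 0) :
    μ < univ.sup' univ_nonempty hB.eigenvalues := by
  obtain ⟨y, hy, hlt⟩ : ∃ y ≠ 0, μ * (y ⬝ᵥ y) < y ⬝ᵥ (B *ᵥ y) := by
    rw [hBA]
    rcases hnz with hxu | hxv
    · exact hA.exists_lt_dotProduct_add_symmSingle_mulVec hx huv hxu hprod hc
    · rw [← symmSingle_comm]
      exact hA.exists_lt_dotProduct_add_symmSingle_mulVec hx huv.symm hxv
        (by rwa [mul_comm]) hc
  exact hB.lt_sup_eigenvalues_of_lt_dotProduct_mulVec hy hlt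

end Matrix

theorem lambda_one_lt_of_delete_or_reverse_negative_edge_general {V : Type*} [Fintype V]
    [DecidableEq V] [Nonempty V] (Γ Γd Γr : SignedGraph V) (u v : V) (hne : u ≠ v)
    (hdel : Γd.adjMatrix = Γ.adjMatrix +
      Matrix.of fun a b => if (a = u ∧ b = v) ∨ (a = v ∧ b = u) then (1 : ℝ) else 0)
    (hrev : Γr.adjMatrix = Γ.adjMatrix +
      Matrix.of fun a b => if (a = u ∧ b = v) ∨ (a = v ∧ b = u) then (2 : ℝ) else 0)
    (hA : Γ.adjMatrix.IsHermitian) (hAd : Γd.adjMatrix.IsHermitian)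
    (hAr : Γr.adjMatrix.IsHermitian)
    (x : V → ℝ)
    (heig : Γ.adjMatrix *ᵥ x =
      (Finset.univ.sup' Finset.univ_nonempty hA.eigenvalues) • x)
    (hprod : 0 ≤ x u * x v) (hnz : x u ≠ 0 ∨ x v ≠ 0) :
    Finset.univ.sup' Finset.univ_nonempty hA.eigenvalues <
      Finset.univ.sup' Finset.univ_nonempty hAd.eigenvalues ∧
    Finset.univ.sup' Finset.univ_nonempty hA.eigenvalues <
      Finset.univ.sup' Finset.univ_nonempty hAr.eigenvalues := by
  have hsymm : Γ.adjMatrix.IsSymm := (conjTranspose_eq_transpose_of_trivial _).symm.trans hA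
  exact ⟨hsymm.lt_sup_eigenvalues_of_eq_add_symmSingle hAd hne one_pos hdel heig hprod hnz,
    hsymm.lt_sup_eigenvalues_of_eq_add_symmSingle hAr hne two_pos hrev heig hprod hnz⟩

/-- Deleting a negative edge `uv` with `x_u x_v ≥ 0` and `(x_u, x_v) ≠ (0,0)`, where `x`
is an eigenvector for `λ₁(Γ)`, strictly increases the largest eigenvalue; so does
reversing its sign to positive. -/
theorem lambda_one_lt_of_delete_or_reverse_negative_edge {V : Type*} [Fintype V]
    [DecidableEq V] [Nonempty V] (Γ Γd Γr : SignedGraph V) (u v : V) (hne : u ≠ v)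
    (huv : Γ.G.Adj u v) (hneg : Γ.sign u v = -1)
    (hdel : Γd.adjMatrix = Γ.adjMatrix +
      Matrix.of fun a b => if (a = u ∧ b = v) ∨ (a = v ∧ b = u) then (1 : ℝ) else 0)
    (hrev : Γr.adjMatrix = Γ.adjMatrix +
      Matrix.of fun a b => if (a = u ∧ b = v) ∨ (a = v ∧ b = u) then (2 : ℝ) else 0)
    (hA : Γ.adjMatrix.IsHermitian) (hAd : Γd.adjMatrix.IsHermitian)
    (hAr : Γr.adjMatrix.IsHermitian)
    (x : V → ℝ) (hx : x ≠ 0)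
    (heig : Γ.adjMatrix *ᵥ x =
      (Finset.univ.sup' Finset.univ_nonempty hA.eigenvalues) • x)
    (hprod : 0 ≤ x u * x v) (hnz : x u ≠ 0 ∨ x v ≠ 0) :
    Finset.univ.sup' Finset.univ_nonempty hA.eigenvalues <
      Finset.univ.sup' Finset.univ_nonempty hAd.eigenvalues ∧
    Finset.univ.sup' Finset.univ_nonempty hA.eigenvalues <
      Finset.univ.sup' Finset.univ_nonempty hAr.eigenvalues :=
  lambda_one_lt_of_delete_or_reverse_negative_edge_general Γ Γd Γr u v hne hdel hrev hA hAd hAr x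
    heig hprod hnz
end

section
/- The adjacency matrix of the signed graph Γ_{r,s} has rank at most 6; equivalently, 0 is an eigenvalue of Γ_{r,s} with multiplicity at least r+s−6. -/
open Matrix Finset

/-- Sign of the edge between the `x`-th vertex of the `r`-side and the `y`-th vertex of the
`s`-side of `Γ_{r,s}`: index `r-1` on the left is `u₁`, index `0` on the left is `u`,
index `s-1` on the right is `v₁`, index `0` on the right is `v`. -/
def gammaSign (r s : ℕ) (x : Fin r) (y : Fin s) : ℝ :=
  if (x : ℕ) = r - 1 then (if (y : ℕ) = 0 then 1 else if (y : ℕ) = s - 1 then -1 else 0)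
  else if (x : ℕ) = 0 then (if (y : ℕ) = 0 then 0 else 1)
  else if (y : ℕ) = s - 1 then 0 else 1

/-- The adjacency matrix of the signed graph `Γ_{r,s}`. -/
def gammaMatrix (r s : ℕ) : Matrix (Fin r ⊕ Fin s) (Fin r ⊕ Fin s) ℝ :=
  Matrix.of fun a b =>
    match a, b with
    | Sum.inl x, Sum.inr y => gammaSign r s x y
    | Sum.inr y, Sum.inl x => gammaSign r s x y
    | _, _ => 0

/-!
`Γ_{r,s}` is bipartite, so its adjacency matrix is `[[0, B], [Bᵀ, 0]]` with `B` the biadjacency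
matrix, and its rank is at most `2 * rank B`. The rows of `B` come in only three kinds (the row of
`u₁`, the row of `u`, and the common row of all other vertices), so `rank B ≤ 3`. Rank–nullity
turns the rank bound into the bound on the multiplicity of the eigenvalue `0`.
-/

namespace Matrix

variable {m n K : Type*} [Fintype n] [Field K]

theorem rank_add_le (A B : Matrix m n K) : (A + B).rank ≤ A.rank + B.rank := by
  rw [rank, mulVecLin_add]
  exact (Submodule.finrank_mono (LinearMap.range_add_le _ _)).trans
    (Submodule.finrank_add_le_finrank_add_finrank _ _)

theorem rank_fromBlocks_zero_zero_le [Fintype m] [DecidableEq m] [DecidableEq n]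
    (B : Matrix m n K) (C : Matrix n m K) :
    (fromBlocks 0 B C 0).rank ≤ B.rank + C.rank := by
  have hsplit : fromBlocks 0 B C 0 =
      fromRows (1 : Matrix m m K) 0 * B * fromCols 0 (1 : Matrix n n K) +
        fromRows 0 (1 : Matrix n n K) * C * fromCols (1 : Matrix m m K) 0 := by
    ext (i | i) (j | j) <;> simp [fromRows_mul, mul_fromCols]
  rw [hsplit]
  refine (rank_add_le _ _).trans (add_le_add ?_ ?_) <;>
    exact (rank_mul_le_left _ _).trans (rank_mul_le_right _ _)

theorem rank_add_finrank_ker_mulVecLin (A : Matrix m n K) :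
    A.rank + Module.finrank K (LinearMap.ker A.mulVecLin) = Fintype.card n := by
  rw [rank, LinearMap.finrank_range_add_finrank_ker, Module.finrank_fintype_fun_eq_card]

end Matrix

theorem gammaMatrix_eq_fromBlocks (r s : ℕ) :
    gammaMatrix r s = fromBlocks 0 (of (gammaSign r s)) (of (gammaSign r s))ᵀ 0 := by
  ext (x | y) (x' | y') <;> rfl

def gammaRowType (r : ℕ) (x : Fin r) : Fin 3 :=
  if (x : ℕ) = r - 1 then 0 else if (x : ℕ) = 0 then 1 else 2

def gammaRowPattern (s : ℕ) : Matrix (Fin 3) (Fin s) ℝ :=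
  of ![fun y => if (y : ℕ) = 0 then 1 else if (y : ℕ) = s - 1 then -1 else 0,
    fun y => if (y : ℕ) = 0 then 0 else 1,
    fun y => if (y : ℕ) = s - 1 then 0 else 1]

theorem of_gammaSign_eq_submatrix (r s : ℕ) :
    of (gammaSign r s) = (gammaRowPattern s).submatrix (gammaRowType r) id := by
  ext x y
  simp only [gammaSign, gammaRowType, gammaRowPattern, submatrix_apply, of_apply, id_eq]
  split_ifs <;> simp_all

theorem rank_of_gammaSign_le_three (r s : ℕ) : (of (gammaSign r s)).rank ≤ 3 := by
  rw [of_gammaSign_eq_submatrix]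
  exact (rank_submatrix_le _ _ _).trans (rank_le_height _)

theorem gammaMatrix_rank_le_six_general (r s : ℕ) :
    (gammaMatrix r s).rank ≤ 6 ∧
    r + s - 6 ≤ Module.finrank ℝ (LinearMap.ker (gammaMatrix r s).mulVecLin) := by
  have hrank : (gammaMatrix r s).rank ≤ 6 := by
    rw [gammaMatrix_eq_fromBlocks]
    calc _ ≤ (of (gammaSign r s)).rank + (of (gammaSign r s))ᵀ.rank :=
          rank_fromBlocks_zero_zero_le _ _
      _ = 2 * (of (gammaSign r s)).rank := by rw [rank_transpose]; ring
      _ ≤ 6 := by linarith [rank_of_gammaSign_le_three r s]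
  have hnullity := (gammaMatrix r s).rank_add_finrank_ker_mulVecLin
  rw [Fintype.card_sum, Fintype.card_fin, Fintype.card_fin] at hnullity
  exact ⟨hrank, by omega⟩

/-- The adjacency matrix of `Γ_{r,s}` has rank at most `6`; equivalently `0` is an
eigenvalue of multiplicity at least `r + s - 6`. -/
theorem gammaMatrix_rank_le_six (r s : ℕ) (hr : 3 ≤ r) (hrs : r ≤ s) :
    (gammaMatrix r s).rank ≤ 6 ∧
    r + s - 6 ≤ Module.finrank ℝ (LinearMap.ker (gammaMatrix r s).mulVecLin) :=
  gammaMatrix_rank_le_six_general r s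
end

section
/- The nonzero eigenvalues of the signed graph Γ_{r,s} are exactly the four roots of x⁴ − ((r−1)(s−1)+2)x² + (2r−3)(2s−3) = 0; in particular, λ₁(Γ_{r,s}) = sqrt( ((r−1)(s−1)+2 + sqrt( ((r−1)(s−1)+2)² − 4(2r−3)(2s−3) )) / 2 ). -/
open Matrix Finset

/-!
`Γ_{r,s}` is bipartite with biadjacency matrix `G`, so its nonzero eigenvalues are the `μ` with
`μ²` a nonzero eigenvalue of `G Gᵀ`. An entry of `G` depends only on which of the classes
`{u}`, interior, `{u₁}` and `{v}`, interior, `{v₁}` its row and column lie in, so `G = P S Qᵀ`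
with class indicator matrices `P`, `Q` and a `3 × 3` sign matrix `S`. As `AB` and `BA` have the
same nonzero eigenvalues, those of `G Gᵀ = P (S QᵀQ Sᵀ Pᵀ)` are those of the `3 × 3` matrix
`S (QᵀQ) Sᵀ (PᵀP)`, whose characteristic polynomial is
`t (t² - ((r-1)(s-1)+2) t + (2r-3)(2s-3))`. Hence `λ₁` is the largest real root of the
biquadratic.
-/

namespace Matrix

variable {K : Type*} [Field K] {l m n o : Type*}

section

variable [Fintype m] [Fintype n]

theorem exists_mulVec_eq_smul_mul_swap {A : Matrix m n K} {B : Matrix n m K} {μ : K}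
    (hμ : μ ≠ 0) (h : ∃ x ≠ 0, (A * B) *ᵥ x = μ • x) : ∃ y ≠ 0, (B * A) *ᵥ y = μ • y := by
  obtain ⟨x, hx, hABx⟩ := h
  refine ⟨B *ᵥ x, fun hBx => hx ?_, ?_⟩
  · have : μ • x = 0 := by rw [← hABx, ← mulVec_mulVec, hBx, mulVec_zero]
    exact (smul_eq_zero.1 this).resolve_left hμ
  · rw [← mulVec_mulVec, mulVec_mulVec x A B, hABx, mulVec_smul]

theorem exists_mulVec_eq_smul_mul_comm {A : Matrix m n K} {B : Matrix n m K} {μ : K}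
    (hμ : μ ≠ 0) : (∃ x ≠ 0, (A * B) *ᵥ x = μ • x) ↔ ∃ y ≠ 0, (B * A) *ᵥ y = μ • y :=
  ⟨exists_mulVec_eq_smul_mul_swap hμ, exists_mulVec_eq_smul_mul_swap hμ⟩

theorem fromBlocks_zero_mulVec_eq_smul_iff {B : Matrix m n K} {C : Matrix n m K} {μ : K}
    {x : m ⊕ n → K} :
    fromBlocks 0 B C 0 *ᵥ x = μ • x ↔
      B *ᵥ (x ∘ Sum.inr) = μ • (x ∘ Sum.inl) ∧ C *ᵥ (x ∘ Sum.inl) = μ • (x ∘ Sum.inr) := by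
  simp only [fromBlocks_mulVec, zero_mulVec, zero_add, add_zero, funext_iff, Sum.forall,
    Sum.elim_inl, Sum.elim_inr, Pi.smul_apply, Function.comp_apply]

theorem exists_fromBlocks_zero_mulVec_eq_smul_iff {B : Matrix m n K} {C : Matrix n m K} {μ : K}
    (hμ : μ ≠ 0) :
    (∃ x ≠ 0, fromBlocks 0 B C 0 *ᵥ x = μ • x) ↔ ∃ y ≠ 0, (B * C) *ᵥ y = μ ^ 2 • y := by
  simp only [fromBlocks_zero_mulVec_eq_smul_iff]
  constructor
  · rintro ⟨x, hx, hB, hC⟩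
    refine ⟨x ∘ Sum.inl, fun hl => hx ?_, ?_⟩
    · have hr : x ∘ Sum.inr = 0 := by simpa [hl, hμ] using hC.symm
      ext (i | j)
      exacts [congrFun hl i, congrFun hr j]
    · rw [← mulVec_mulVec, hC, mulVec_smul, hB, smul_smul, sq]
  · rintro ⟨y, hy, hBC⟩
    refine ⟨Sum.elim y (μ⁻¹ • C *ᵥ y), fun h => hy (funext fun i => congrFun h (Sum.inl i)),
      ?_, ?_⟩
    · rw [Sum.elim_comp_inr, Sum.elim_comp_inl, mulVec_smul, mulVec_mulVec, hBC, smul_smul, sq,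
        inv_mul_cancel_left₀ hμ]
    · rw [Sum.elim_comp_inr, Sum.elim_comp_inl, smul_smul, mul_inv_cancel₀ hμ, one_smul]

end

theorem exists_mulVec_eq_smul_iff_det [Fintype n] [DecidableEq n] {A : Matrix n n K} {μ : K} :
    (∃ x ≠ 0, A *ᵥ x = μ • x) ↔ det (μ • 1 - A) = 0 := by
  rw [← exists_mulVec_eq_zero_iff]
  simp only [sub_mulVec, smul_mulVec, one_mulVec, sub_eq_zero, eq_comm]

theorem submatrix_eq_one_submatrix_mul_mul_transpose [Fintype l] [Fintype m] [DecidableEq l]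
    [DecidableEq m] (S : Matrix l m K) (f : n → l) (g : o → m) :
    S.submatrix f g =
      (1 : Matrix l l K).submatrix f id * S * ((1 : Matrix m m K).submatrix g id)ᵀ := by
  ext i j
  simp [mul_apply, one_apply]

theorem transpose_one_submatrix_mul_self [Fintype n] [DecidableEq m] (g : n → m) :
    ((1 : Matrix m m K).submatrix g id)ᵀ * (1 : Matrix m m K).submatrix g id =
      diagonal fun c => (#{j | g j = c} : K) := by
  ext c d
  simp only [mul_apply, transpose_apply, submatrix_apply, id, one_apply, diagonal_apply]
  split_ifs with h
  · subst h
    rw [Finset.natCast_card_filter]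
    exact Finset.sum_congr rfl fun j _ => by split_ifs <;> simp
  · exact Finset.sum_eq_zero fun j _ => by grind

theorem exists_submatrix_mul_submatrix_mulVec_eq_smul_iff [Fintype l] [Fintype m] [Fintype n]
    [Fintype o] [DecidableEq l] [DecidableEq m] (S : Matrix l m K) (T : Matrix m l K)
    (f : n → l) (g : o → m) {μ : K} (hμ : μ ≠ 0) :
    (∃ x ≠ 0, (S.submatrix f g * T.submatrix g f) *ᵥ x = μ • x) ↔
      ∃ y ≠ 0, (S * diagonal (fun c => (#{j | g j = c} : K)) * T *
        diagonal (fun c => (#{i | f i = c} : K))) *ᵥ y = μ • y := by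
  set P := (1 : Matrix l l K).submatrix f id
  set Q := (1 : Matrix m m K).submatrix g id
  have hST : S.submatrix f g * T.submatrix g f = P * (S * Qᵀ * Q * T * Pᵀ) := by
    simp only [submatrix_eq_one_submatrix_mul_mul_transpose S,
      submatrix_eq_one_submatrix_mul_mul_transpose T, P, Q, Matrix.mul_assoc]
  have hquot : S * Qᵀ * Q * T * Pᵀ * P = S * diagonal (fun c => (#{j | g j = c} : K)) * T *
      diagonal (fun c => (#{i | f i = c} : K)) := by
    simp only [← transpose_one_submatrix_mul_self, P, Q, Matrix.mul_assoc]
  rw [hST, exists_mulVec_eq_smul_mul_comm hμ, hquot]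

end Matrix

namespace Matrix.IsHermitian

variable {n : Type*} [Fintype n] [DecidableEq n] {A : Matrix n n ℝ}

theorem mem_range_eigenvalues_of_mulVec_eq_smul (hA : A.IsHermitian) {μ : ℝ} {x : n → ℝ}
    (hx : x ≠ 0) (h : A *ᵥ x = μ • x) : μ ∈ Set.range hA.eigenvalues := by
  rw [← hA.spectrum_real_eq_range_eigenvalues, ← spectrum_toLin']
  exact Module.End.hasEigenvalue_iff_mem_spectrum.1
    (Module.End.hasEigenvalue_of_hasEigenvector ⟨Module.End.mem_eigenspace_iff.2 h, hx⟩)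

theorem sup'_eigenvalues_eq (hA : A.IsHermitian) (hn : (univ : Finset n).Nonempty) {t : ℝ}
    (hle : ∀ μ : ℝ, (∃ x ≠ 0, A *ᵥ x = μ • x) → μ ≤ t) (ht : ∃ x ≠ 0, A *ᵥ x = t • x) :
    univ.sup' hn hA.eigenvalues = t := by
  obtain ⟨x, hx, hAx⟩ := ht
  obtain ⟨i, hi⟩ := hA.mem_range_eigenvalues_of_mulVec_eq_smul hx hAx
  refine le_antisymm (sup'_le _ _ fun j _ => hle _ ⟨_, fun h => ?_, hA.mulVec_eigenvectorBasis j⟩)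
    (hi ▸ le_sup' _ (mem_univ i))
  exact hA.eigenvectorBasis.orthonormal.ne_zero j (by simpa using congrArg (WithLp.toLp 2) h)

end Matrix.IsHermitian

theorem le_sqrt_of_biquadratic_eq_zero {p c μ : ℝ} (h : μ ^ 4 - p * μ ^ 2 + c = 0) :
    μ ≤ √((p + √(p ^ 2 - 4 * c)) / 2) := by
  have hdisc : p ^ 2 - 4 * c = (2 * μ ^ 2 - p) ^ 2 := by linear_combination (-4) * h
  have hμ2 : μ ^ 2 ≤ (p + √(p ^ 2 - 4 * c)) / 2 := by
    rw [hdisc, Real.sqrt_sq_eq_abs]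
    linarith [le_abs_self (2 * μ ^ 2 - p)]
  calc μ ≤ |μ| := le_abs_self μ
    _ = √(μ ^ 2) := (Real.sqrt_sq_eq_abs μ).symm
    _ ≤ _ := Real.sqrt_le_sqrt hμ2

theorem biquadratic_sqrt_eq_zero {p c : ℝ} (hp : 0 ≤ p) (hdisc : 0 ≤ p ^ 2 - 4 * c) :
    √((p + √(p ^ 2 - 4 * c)) / 2) ^ 4 - p * √((p + √(p ^ 2 - 4 * c)) / 2) ^ 2 + c = 0 := by
  have he := Real.sq_sqrt hdisc
  have ht := Real.sq_sqrt (by positivity : 0 ≤ (p + √(p ^ 2 - 4 * c)) / 2)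
  rw [show (4 : ℕ) = 2 * 2 from rfl, pow_mul, ht]
  linear_combination he / 4

def endpointClass (n : ℕ) (i : Fin n) : Fin 3 :=
  if (i : ℕ) = 0 then 0 else if (i : ℕ) = n - 1 then 2 else 1

theorem natCast_card_endpointClass_eq {n : ℕ} (hn : 2 ≤ n) :
    (fun c => (#{i | endpointClass n i = c} : ℝ)) = ![1, (n : ℝ) - 2, 1] := by
  obtain ⟨k, rfl⟩ : ∃ k, n = k + 2 := ⟨n - 2, by omega⟩
  have hinterior : ∀ i : Fin k, endpointClass (k + 2) i.castSucc.succ = 1 := fun i => by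
    simp only [endpointClass, Fin.val_succ, Fin.val_castSucc]
    rw [if_neg (by omega), if_neg (by omega)]
  funext c
  rw [Finset.natCast_card_filter, Fin.sum_univ_succ, Fin.sum_univ_castSucc]
  simp only [hinterior]
  fin_cases c <;> simp [endpointClass]

/-- Rows `0, 1, 2` stand for `u`, the other vertices of the `r`-side of `K_{r-1,s-1}`, and `u₁`;
columns `0, 1, 2` for `v`, the other vertices of its `s`-side, and `v₁`. -/
def gammaClassSign : Matrix (Fin 3) (Fin 3) ℝ := !![0, 1, 1; 1, 1, 0; 1, 0, -1]

theorem gammaSign_eq_gammaClassSign {r s : ℕ} (hr : 2 ≤ r) (hs : 2 ≤ s) (x : Fin r) (y : Fin s) :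
    gammaSign r s x y = gammaClassSign (endpointClass r x) (endpointClass s y) := by
  unfold gammaSign endpointClass
  split_ifs <;> first | omega | rfl

theorem gammaMatrix_eq_fromBlocks_s10 {r s : ℕ} (hr : 2 ≤ r) (hs : 2 ≤ s) :
    gammaMatrix r s =
      fromBlocks 0 (gammaClassSign.submatrix (endpointClass r) (endpointClass s))
        (gammaClassSign.submatrix (endpointClass r) (endpointClass s))ᵀ 0 := by
  ext (x | y) (x | y) <;> simp [gammaMatrix, gammaSign_eq_gammaClassSign hr hs]

def gammaQuotient (a b : ℝ) : Matrix (Fin 3) (Fin 3) ℝ :=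
  !![b - 1, (b - 2) * (a - 2), -1; b - 2, (b - 1) * (a - 2), 1; -1, a - 2, 2]

theorem gammaClassSign_mul_diagonal_mul_transpose_mul_diagonal (a b : ℝ) :
    gammaClassSign * diagonal ![1, b - 2, 1] * gammaClassSignᵀ * diagonal ![1, a - 2, 1] =
      gammaQuotient a b := by
  ext i j
  simp only [mul_apply, transpose_apply, Fin.sum_univ_three]
  fin_cases i <;> fin_cases j <;>
    simp [gammaQuotient, gammaClassSign, -mul_eq_mul_right_iff] <;> ring

theorem det_smul_one_sub_gammaQuotient (a b t : ℝ) :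
    det (t • 1 - gammaQuotient a b) =
      t * (t ^ 2 - ((a - 1) * (b - 1) + 2) * t + (2 * a - 3) * (2 * b - 3)) := by
  simp [gammaQuotient, det_fin_three, one_apply]
  ring

theorem exists_gammaMatrix_mulVec_eq_smul_iff {r s : ℕ} (hr : 2 ≤ r) (hs : 2 ≤ s) {μ : ℝ}
    (hμ : μ ≠ 0) :
    (∃ x ≠ 0, gammaMatrix r s *ᵥ x = μ • x) ↔
      μ ^ 4 - (((r : ℝ) - 1) * ((s : ℝ) - 1) + 2) * μ ^ 2 +
        (2 * (r : ℝ) - 3) * (2 * (s : ℝ) - 3) = 0 := by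
  have hμ2 : μ ^ 2 ≠ 0 := pow_ne_zero 2 hμ
  rw [gammaMatrix_eq_fromBlocks_s10 hr hs, exists_fromBlocks_zero_mulVec_eq_smul_iff hμ,
    transpose_submatrix, exists_submatrix_mul_submatrix_mulVec_eq_smul_iff _ _ _ _ hμ2,
    natCast_card_endpointClass_eq hr, natCast_card_endpointClass_eq hs,
    gammaClassSign_mul_diagonal_mul_transpose_mul_diagonal, exists_mulVec_eq_smul_iff_det,
    det_smul_one_sub_gammaQuotient, mul_eq_zero, or_iff_right hμ2]
  ring_nf

theorem gamma_discriminant_nonneg {a b : ℝ} (ha : 3 ≤ a) (hb : 3 ≤ b) :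
    0 ≤ ((a - 1) * (b - 1) + 2) ^ 2 - 4 * ((2 * a - 3) * (2 * b - 3)) := by
  nlinarith [mul_nonneg (sub_nonneg.2 ha) (sub_nonneg.2 hb), sq_nonneg (a - b)]

/-- The nonzero eigenvalues of `Γ_{r,s}` are exactly the four roots of
`x⁴ - ((r-1)(s-1)+2)x² + (2r-3)(2s-3) = 0`; in particular `λ₁(Γ_{r,s})` equals the stated
closed-form expression. -/
theorem gammaMatrix_eigenvalues (r s : ℕ) (hr : 3 ≤ r) (hrs : r ≤ s)
    (hM : (gammaMatrix r s).IsHermitian) :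
    (∀ μ : ℝ, μ ≠ 0 →
      ((∃ x : (Fin r ⊕ Fin s) → ℝ, x ≠ 0 ∧ gammaMatrix r s *ᵥ x = μ • x) ↔
        μ ^ 4 - (((r : ℝ) - 1) * ((s : ℝ) - 1) + 2) * μ ^ 2 +
          (2 * (r : ℝ) - 3) * (2 * (s : ℝ) - 3) = 0)) ∧
    Finset.univ.sup' ⟨Sum.inl ⟨0, by omega⟩, Finset.mem_univ _⟩ hM.eigenvalues =
      Real.sqrt (((((r : ℝ) - 1) * ((s : ℝ) - 1) + 2) + Real.sqrt ((((r : ℝ) - 1) * ((s : ℝ) - 1) + 2) ^ 2 - 4 * (2 * (r : ℝ) - 3) * (2 * (s : ℝ) - 3))) / 2) := by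
  have hs : 3 ≤ s := hr.trans hrs
  have hroots := fun μ (hμ : μ ≠ 0) =>
    exists_gammaMatrix_mulVec_eq_smul_iff (r := r) (s := s) (by omega) (by omega) hμ
  refine ⟨hroots, ?_⟩
  have hrR : (3 : ℝ) ≤ r := by exact_mod_cast hr
  have hsR : (3 : ℝ) ≤ s := by exact_mod_cast hs
  have hp : 0 < ((r : ℝ) - 1) * ((s : ℝ) - 1) + 2 := by nlinarith
  rw [mul_assoc 4]
  apply hM.sup'_eigenvalues_eq
  · intro μ hμ
    rcases eq_or_ne μ 0 with rfl | hμ0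
    · exact Real.sqrt_nonneg _
    · exact le_sqrt_of_biquadratic_eq_zero ((hroots μ hμ0).1 hμ)
  · exact (hroots _ (Real.sqrt_pos.2 (by positivity)).ne').2
      (biquadratic_sqrt_eq_zero hp.le (gamma_discriminant_nonneg hrR hsR))
end

section
/- For integers 3 ≤ r ≤ s with s ≥ 4, let f(r,s) = sqrt( ((r−1)(s−1)+2 + sqrt( ((r−1)(s−1)+2)² − 4(2r−3)(2s−3) )) / 2 ). Then f(r,s) > sqrt((r−1)(s−2)). -/
/-! The number `f(r,s)²` is the larger root of `t² - A t + Q` with `A = (r-1)(s-1)+2` and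
`Q = (2r-3)(2s-3)`. Since `A - (r-1)(s-2) = r + 1`, this quadratic evaluated at `P = (r-1)(s-2)` is
`Q - (r²-1)(s-2)`, which is negative for `s ≥ 4`; so `P` lies strictly between the two roots. -/

theorem lt_quadratic_root_of_eval_neg {b c t : ℝ} (h : t ^ 2 - b * t + c < 0) :
    t < (b + √(b ^ 2 - 4 * c)) / 2 := by
  have : 2 * t - b < √(b ^ 2 - 4 * c) :=
    calc 2 * t - b ≤ |2 * t - b| := le_abs_self _
      _ = √((2 * t - b) ^ 2) := (Real.sqrt_sq_eq_abs _).symm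
      _ < √(b ^ 2 - 4 * c) := Real.sqrt_lt_sqrt (sq_nonneg _) (by linear_combination 4 * h)
  linarith

theorem f_gt_sqrt_general (r s : ℕ) (hr : 3 ≤ r) (hs : 4 ≤ s) :
    Real.sqrt (((r : ℝ) - 1) * ((s : ℝ) - 2)) <
      Real.sqrt (((((r : ℝ) - 1) * ((s : ℝ) - 1) + 2) + Real.sqrt ((((r : ℝ) - 1) * ((s : ℝ) - 1) + 2) ^ 2 - 4 * (2 * (r : ℝ) - 3) * (2 * (s : ℝ) - 3))) / 2) := by
  have hr' : (3 : ℝ) ≤ r := by exact_mod_cast hr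
  have hs' : (4 : ℝ) ≤ s := by exact_mod_cast hs
  rw [mul_assoc 4]
  refine Real.sqrt_lt_sqrt (by nlinarith) (lt_quadratic_root_of_eval_neg ?_)
  -- `(r²-1)(s-2) - (2r-3)(2s-3) = (s-4)((r-2)²+1) + 2(r-5/2)² + 1/2`
  have gap : (2 * (r : ℝ) - 3) * (2 * s - 3) < ((r : ℝ) ^ 2 - 1) * (s - 2) := by
    nlinarith [mul_nonneg (sub_nonneg.2 hs') (sq_nonneg ((r : ℝ) - 2)), sq_nonneg (2 * (r : ℝ) - 5)]
  linear_combination gap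

/-- For integers `3 ≤ r ≤ s` with `s ≥ 4`, `f(r,s) > sqrt((r-1)(s-2))`. -/
theorem f_gt_sqrt (r s : ℕ) (hr : 3 ≤ r) (hrs : r ≤ s) (hs : 4 ≤ s) :
    Real.sqrt (((r : ℝ) - 1) * ((s : ℝ) - 2)) <
      Real.sqrt (((((r : ℝ) - 1) * ((s : ℝ) - 1) + 2) + Real.sqrt ((((r : ℝ) - 1) * ((s : ℝ) - 1) + 2) ^ 2 - 4 * (2 * (r : ℝ) - 3) * (2 * (s : ℝ) - 3))) / 2) :=
  f_gt_sqrt_general r s hr hs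
end

section
/- Any unbalanced signed bipartite graph on 3+3 vertices (partite sets both of size 3) containing no negative 4-cycle has spectral radius at most sqrt(3), with equality iff it contains a negative 6-cycle as a spanning structure; in particular, the negative 6-cycle C₆^− has spectral radius sqrt(3). -/
/-!
A negative cycle has even length because the graph is bipartite, and on six vertices
without negative quadrilaterals it must be a Hamiltonian hexagon `v₀ ⋯ v₅`. Bipartiteness
forbids the chords `vᵢvᵢ₊₂`, and a chord `vᵢvᵢ₊₃` would split the hexagon into two
quadrilaterals whose signs multiply to the sign of the hexagon, so one of them would be
negative. Hence `Γ` is exactly the negative hexagon, whose adjacency matrix satisfies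
`A³ = 3A`: its eigenvalues lie in `{0, ±√3}` and, as `A ≠ 0`, the spectral radius is `√3`.
-/

open Matrix Finset

section Spectrum

variable {n 𝕜 : Type*} [Fintype n] [DecidableEq n] [RCLike 𝕜] {A : Matrix n n 𝕜}

lemma Matrix.eigenvalue_pow_three_eq {r t : ℝ} {v : n → 𝕜} (h3 : A ^ 3 = r • A)
    (hv : A *ᵥ v = t • v) (hv0 : v ≠ 0) : t ^ 3 = r * t := by
  have h : (t ^ 3) • v = (r * t) • v :=
    calc (t ^ 3) • v = A ^ 3 *ᵥ v := by
          simp only [pow_three, ← mulVec_mulVec, hv, mulVec_smul, smul_smul, mul_assoc]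
      _ = (r * t) • v := by rw [h3, smul_mulVec, hv, smul_smul]
  exact smul_left_injective ℝ hv0 h

lemma Matrix.IsHermitian.eigenvalues_eq_zero_or_abs_eq_sqrt (hA : A.IsHermitian) {r : ℝ}
    (h3 : A ^ 3 = r • A) (i : n) : hA.eigenvalues i = 0 ∨ |hA.eigenvalues i| = √r := by
  have hv0 : (hA.eigenvectorBasis i : n → 𝕜) ≠ 0 := by
    simpa using hA.eigenvectorBasis.orthonormal.ne_zero i
  have h := eigenvalue_pow_three_eq h3 (hA.mulVec_eigenvectorBasis i) hv0
  rcases mul_eq_zero.mp (show hA.eigenvalues i * (hA.eigenvalues i ^ 2 - r) = 0 by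
    linear_combination h) with h0 | h2
  · exact .inl h0
  · exact .inr (by rw [← Real.sqrt_sq_eq_abs]; congr 1; linarith)

lemma Matrix.IsHermitian.sup_abs_eigenvalues_eq_sqrt [Nonempty n] (hA : A.IsHermitian)
    (hA0 : A ≠ 0) {r : ℝ} (h3 : A ^ 3 = r • A) :
    univ.sup' univ_nonempty (fun i => |hA.eigenvalues i|) = √r := by
  obtain ⟨i, hi⟩ := Function.ne_iff.mp (hA.eigenvalues_eq_zero_iff.not.mpr hA0)
  refine le_antisymm (sup'_le _ _ fun j _ => ?_) ?_
  · rcases hA.eigenvalues_eq_zero_or_abs_eq_sqrt h3 j with h | h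
    · simp [h]
    · exact h.le
  · rw [← (hA.eigenvalues_eq_zero_or_abs_eq_sqrt h3 i).resolve_left hi]
    exact le_sup' (fun j => |hA.eigenvalues j|) (mem_univ i)

end Spectrum

lemma ZMod.prod_univ_six {M : Type*} [CommMonoid M] (f : ZMod 6 → M) :
    ∏ k, f k = f 0 * f 1 * f 2 * f 3 * f 4 * f 5 :=
  Fin.prod_univ_six f

lemma ZMod.prod_univ_six_add_right {M : Type*} [CommMonoid M] (f : ZMod 6 → M) (i : ZMod 6) :
    f i * f (1 + i) * f (2 + i) * (f (3 + i) * f (4 + i) * f (5 + i)) = ∏ k, f k := by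
  rw [← Equiv.prod_comp (Equiv.addRight i) f, ZMod.prod_univ_six]
  simp only [Equiv.coe_addRight, zero_add, mul_assoc]

def hexagonMatrix (S : ZMod 6 → ℝ) : Matrix (ZMod 6) (ZMod 6) ℝ :=
  of fun i j => (if j = i + 1 then S i else 0) + (if i = j + 1 then S j else 0)

lemma hexagonMatrix_mulVec (S g : ZMod 6 → ℝ) (i : ZMod 6) :
    (hexagonMatrix S *ᵥ g) i = S i * g (i + 1) + S (i - 1) * g (i - 1) := by
  have h (j : ZMod 6) : i = j + 1 ↔ j = i - 1 := by rw [eq_sub_iff_add_eq, eq_comm]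
  simp only [mulVec, dotProduct, hexagonMatrix, of_apply, add_mul, sum_add_distrib, ite_mul,
    zero_mul, h, sum_ite_eq', mem_univ, if_true]

/-- Walks of length three cancel between antipodal vertices, the two halves of a negative
hexagon having opposite signs. -/
lemma hexagonMatrix_pow_three {S : ZMod 6 → ℝ} (hS : ∀ k, S k ^ 2 = 1) (hP : ∏ k, S k = -1) :
    hexagonMatrix S ^ 3 = (3 : ℝ) • hexagonMatrix S := by
  refine ext_iff_mulVec.mpr fun g => funext fun i => ?_
  have hhalf : S i * S (1 + i) * S (2 + i) + S (5 + i) * S (4 + i) * S (3 + i) = 0 := by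
    linear_combination
      (S i * S (1 + i) * S (2 + i)) * (ZMod.prod_univ_six_add_right S i).trans hP
      - S (3 + i) * S (4 + i) * S (5 + i) * (S (1 + i) ^ 2 * S (2 + i) ^ 2 * hS i
        + S (2 + i) ^ 2 * hS (1 + i) + hS (2 + i))
  simp only [pow_three, ← mulVec_mulVec, smul_mulVec, Pi.smul_apply, hexagonMatrix_mulVec]
  ring_nf
  reduce_mod_char
  linear_combination g (3 + i) * hhalf
    + S i * g (1 + i) * (hS (1 + i) + hS (5 + i) + hS i)
    + S (5 + i) * g (5 + i) * (hS i + hS (4 + i) + hS (5 + i))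

namespace SimpleGraph

variable {V : Type*} {G : SimpleGraph V}

lemma Coloring.not_adj_of_adj_of_adj (C : G.Coloring Bool) {a b c : V} (hab : G.Adj a b)
    (hbc : G.Adj b c) : ¬ G.Adj a c := fun hac => by
  have := C.valid hab; have := C.valid hbc; have := C.valid hac
  cases h₁ : C a <;> cases h₂ : C b <;> cases h₃ : C c <;> simp_all

lemma Walk.IsCycle.length_le_card [Fintype V] {u : V} {p : G.Walk u u} (hp : p.IsCycle) :
    p.length ≤ Fintype.card V := by
  simpa using hp.support_nodup.length_le_card

lemma Walk.IsCycle.length_eq_six_of_ne_four [Fintype V] (C : G.Coloring Bool)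
    (hcard : Fintype.card V ≤ 6) {u : V} {p : G.Walk u u} (hp : p.IsCycle)
    (h4 : p.length ≠ 4) : p.length = 6 := by
  obtain ⟨k, hk⟩ := (C.even_length_iff_congr p).mpr Iff.rfl
  have := hp.three_le_length
  have := hp.length_le_card
  omega

end SimpleGraph

namespace SignedGraph

variable {V : Type*} (Γ : SignedGraph V)

lemma sign_sq_of_adj {u v : V} (h : Γ.G.Adj u v) : Γ.sign u v ^ 2 = 1 := by
  rcases Γ.sign_edge u v h with h | h <;> simp [h]

lemma adjMatrix_ne_zero_of_adj {u v : V} (h : Γ.G.Adj u v) : Γ.adjMatrix ≠ 0 := fun h0 => by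
  have h0 : Γ.sign u v = 0 := congrFun₂ h0 u v
  simpa [h0] using Γ.sign_sq_of_adj h

lemma prod_edgeSign_eq_prod_range {a b : V} (p : Γ.G.Walk a b) :
    (p.edges.map Γ.edgeSign).prod
      = ∏ k ∈ range p.length, Γ.sign (p.getVert k) (p.getVert (k + 1)) := by
  induction p with
  | nil => simp
  | cons hadj q ih =>
    rw [SimpleGraph.Walk.edges_cons, List.map_cons, List.prod_cons, ih,
      SimpleGraph.Walk.length_cons, prod_range_succ', mul_comm]
    simp only [SimpleGraph.Walk.getVert_cons_succ, SimpleGraph.Walk.getVert_zero]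
    rfl

lemma sign_mul_eq_one_of_four_cycle
    (hC4 : ∀ (u : V) (w : Γ.G.Walk u u), Γ.IsNegCycle w → w.length ≠ 4) {a b c d : V}
    (hab : Γ.G.Adj a b) (hbc : Γ.G.Adj b c) (hcd : Γ.G.Adj c d) (hda : Γ.G.Adj d a)
    (hac : a ≠ c) (hbd : b ≠ d) :
    Γ.sign a b * Γ.sign b c * Γ.sign c d * Γ.sign d a = 1 := by
  let w : Γ.G.Walk a a := .cons hab (.cons hbc (.cons hcd (.cons hda .nil)))
  have hw : w.IsCycle := by
    simp [w, SimpleGraph.Walk.cons_isCycle_iff, hab.ne, hbc.ne, hcd.ne, hda.ne, hab.ne',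
      hda.ne', hac, hac.symm, hbd]
  have hprod : (w.edges.map Γ.edgeSign).prod
      = Γ.sign a b * Γ.sign b c * Γ.sign c d * Γ.sign d a := by
    simp [w, edgeSign, mul_assoc]
  have hsq : (Γ.sign a b * Γ.sign b c * Γ.sign c d * Γ.sign d a) ^ 2 = 1 := by
    simp only [mul_pow, Γ.sign_sq_of_adj, hab, hbc, hcd, hda, one_mul]
  exact (sq_eq_one_iff.mp hsq).resolve_right fun h => hC4 a w ⟨hw, hprod.trans h⟩ rfl

structure IsNegHexagon (e : ZMod 6 → V) : Prop where
  injective : Function.Injective e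
  adj : ∀ k, Γ.G.Adj (e k) (e (k + 1))
  prod_sign : ∏ k, Γ.sign (e k) (e (k + 1)) = -1

variable {Γ}

lemma isNegHexagon_getVert {u : V} {w : Γ.G.Walk u u} (hw : Γ.IsNegCycle w)
    (h6 : w.length = 6) : Γ.IsNegHexagon fun k => w.getVert k.val := by
  have hwrap : w.getVert 6 = w.getVert 0 := by rw [← h6, w.getVert_length, w.getVert_zero]
  refine ⟨fun i j hij => ZMod.val_injective 6 <| hw.1.getVert_injOn' ?_ ?_ hij, fun k => ?_, ?_⟩
  · simpa only [Set.mem_ofPred_eq, h6] using Nat.le_sub_one_of_lt i.val_lt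
  · simpa only [Set.mem_ofPred_eq, h6] using Nat.le_sub_one_of_lt j.val_lt
  · rcases (Nat.le_of_lt_succ k.val_lt).lt_or_eq with hk | hk
    · rw [ZMod.val_add_of_lt (show k.val + 1 < 6 by omega)]
      exact w.adj_getVert_succ (by omega)
    · obtain rfl : k = 5 := ZMod.val_injective 6 hk
      exact hwrap ▸ w.adj_getVert_succ (i := 5) (by omega)
  · have hP := hw.2
    rw [prod_edgeSign_eq_prod_range, h6] at hP
    simp only [prod_range_succ, prod_range_zero, one_mul, hwrap] at hP
    exact (ZMod.prod_univ_six _).trans hP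

namespace IsNegHexagon

variable {e : ZMod 6 → V} (h : Γ.IsNegHexagon e)
include h

lemma rotate (i : ZMod 6) : Γ.IsNegHexagon fun k => e (k + i) where
  injective := h.injective.comp (add_left_injective i)
  adj k := by simpa only [add_right_comm] using h.adj (k + i)
  prod_sign := by
    simp only [add_right_comm _ 1 i]
    exact (Equiv.prod_comp (Equiv.addRight i) fun k => Γ.sign (e k) (e (k + 1))).trans
      h.prod_sign

lemma not_adj_add_two (C : Γ.G.Coloring Bool) (i : ZMod 6) : ¬ Γ.G.Adj (e i) (e (i + 2)) :=
  C.not_adj_of_adj_of_adj (h.adj i) (by simpa [add_assoc, one_add_one_eq_two] using h.adj (i + 1))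

variable (hC4 : ∀ (u : V) (w : Γ.G.Walk u u), Γ.IsNegCycle w → w.length ≠ 4)
include hC4

lemma not_adj_zero_three : ¬ Γ.G.Adj (e 0) (e 3) := by
  intro hadj
  have hne (i j : ZMod 6) (hij : i ≠ j) : e i ≠ e j := h.injective.ne hij
  have h₁ := Γ.sign_mul_eq_one_of_four_cycle hC4 (a := e 0) (b := e 1) (c := e 2) (d := e 3)
    (h.adj 0) (h.adj 1) (h.adj 2) hadj.symm (hne 0 2 (by decide)) (hne 1 3 (by decide))
  have h₂ := Γ.sign_mul_eq_one_of_four_cycle hC4 (a := e 3) (b := e 4) (c := e 5) (d := e 0)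
    (h.adj 3) (h.adj 4) (h.adj 5) hadj (hne 3 5 (by decide)) (hne 4 0 (by decide))
  have hP : Γ.sign (e 0) (e 1) * Γ.sign (e 1) (e 2) * Γ.sign (e 2) (e 3) * Γ.sign (e 3) (e 4)
      * Γ.sign (e 4) (e 5) * Γ.sign (e 5) (e 0) = -1 :=
    (ZMod.prod_univ_six _).symm.trans h.prod_sign
  have ht := Γ.sign_sq_of_adj hadj
  rw [Γ.sign_symm (e 3)] at h₁
  have : (1 : ℝ) = -1 := by
    linear_combination -(Γ.sign (e 3) (e 4) * Γ.sign (e 4) (e 5) * Γ.sign (e 5) (e 0)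
      * Γ.sign (e 0) (e 3)) * h₁ - h₂ + Γ.sign (e 0) (e 3) ^ 2 * hP - ht
  norm_num at this

lemma not_adj_add_three (i : ZMod 6) : ¬ Γ.G.Adj (e i) (e (i + 3)) := by
  simpa [add_comm] using (h.rotate i).not_adj_zero_three hC4

lemma sign_eq_hexagonMatrix (C : Γ.G.Coloring Bool) (i j : ZMod 6) :
    Γ.sign (e i) (e j) = hexagonMatrix (fun k => Γ.sign (e k) (e (k + 1))) i j := by
  obtain ⟨d, rfl⟩ : ∃ d, j = i + d := ⟨j - i, by ring⟩
  obtain rfl | rfl | rfl | rfl | rfl | rfl : d = 0 ∨ d = 1 ∨ d = 2 ∨ d = 3 ∨ d = 4 ∨ d = 5 := by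
    revert d; decide
  all_goals simp +decide only [hexagonMatrix, of_apply, add_assoc, add_right_inj, left_eq_add,
    if_true, if_false, add_zero, zero_add]
  · exact Γ.sign_nonedge _ _ Γ.G.irrefl
  · exact Γ.sign_nonedge _ _ (h.not_adj_add_two C i)
  · exact Γ.sign_nonedge _ _ (h.not_adj_add_three hC4 i)
  · refine Γ.sign_nonedge _ _ fun hadj => h.not_adj_add_two C (i + 4) ?_
    rwa [add_assoc, show (4 + 2 : ZMod 6) = 0 from rfl, add_zero, Γ.G.adj_comm]
  · rw [show (5 + 1 : ZMod 6) = 0 from rfl, add_zero, Γ.sign_symm]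

lemma adjMatrix_pow_three [Fintype V] [DecidableEq V] (C : Γ.G.Coloring Bool)
    (hcard : Fintype.card V = 6) :
    Γ.adjMatrix ^ 3 = (3 : ℝ) • Γ.adjMatrix := by
  let E := Equiv.ofBijective e
    ((Fintype.bijective_iff_injective_and_card e).mpr ⟨h.injective, by simp [hcard]⟩)
  have hsub : Γ.adjMatrix.submatrix E E = hexagonMatrix fun k => Γ.sign (e k) (e (k + 1)) :=
    Matrix.ext fun i j => h.sign_eq_hexagonMatrix hC4 C i j
  apply (reindexAlgEquiv ℝ ℝ E.symm).injective
  rw [map_pow, map_smul, coe_reindexAlgEquiv, reindex_apply, Equiv.symm_symm, hsub,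
    hexagonMatrix_pow_three (fun k => Γ.sign_sq_of_adj (h.adj k)) h.prod_sign]

end IsNegHexagon

end SignedGraph

/-- An unbalanced signed bipartite graph with both partite sets of size `3` and no
negative 4-cycle has spectral radius at most `√3`, with equality iff it contains a
spanning negative 6-cycle. -/
theorem three_by_three_spectral_radius {V : Type*} [Fintype V] [DecidableEq V]
    [Nonempty V] (Γ : SignedGraph V)
    (c : V → Bool) (hc : ∀ u v, Γ.G.Adj u v → c u ≠ c v)
    (h3t : (Finset.univ.filter fun v => c v = true).card = 3)
    (h3f : (Finset.univ.filter fun v => c v = false).card = 3)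
    (hU : Γ.Unbalanced)
    (hC4 : ∀ (u : V) (w : Γ.G.Walk u u), Γ.IsNegCycle w → w.length ≠ 4)
    (hA : Γ.adjMatrix.IsHermitian) :
    Finset.univ.sup' Finset.univ_nonempty (fun i => |hA.eigenvalues i|) ≤ Real.sqrt 3 ∧
    (Finset.univ.sup' Finset.univ_nonempty (fun i => |hA.eigenvalues i|) = Real.sqrt 3 ↔
      ∃ (u : V) (w : Γ.G.Walk u u), Γ.IsNegCycle w ∧ w.length = 6 ∧
        ∀ v, v ∈ w.support) := by
  obtain ⟨u, w, hw⟩ := hU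
  let C : Γ.G.Coloring Bool := SimpleGraph.Coloring.mk c fun h => hc _ _ h
  have hcard : Fintype.card V = 6 := by
    rw [← card_univ, ← card_filter_add_card_filter_not (fun v => c v = true)]
    simp only [Bool.not_eq_true, h3t, h3f]
  have hlen : w.length = 6 := hw.1.length_eq_six_of_ne_four C hcard.le (hC4 u w hw)
  have hhex := Γ.isNegHexagon_getVert hw hlen
  have hrad := hA.sup_abs_eigenvalues_eq_sqrt (Γ.adjMatrix_ne_zero_of_adj (hhex.adj 0))
    (hhex.adjMatrix_pow_three hC4 C hcard)
  have hspan : ∀ v, v ∈ w.support :=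
    (SimpleGraph.Walk.isHamiltonianCycle_iff_isCycle_and_length_eq.mpr
      ⟨hw.1, hlen.trans hcard.symm⟩).mem_support
  exact ⟨hrad.le, iff_of_true hrad ⟨u, w, hw, hlen, hspan⟩⟩
end
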